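/- arXiv:2001.01725 — 2 statements merged into one kernel-verified Lean document; each statement's English description precedes it below -/
import Mathlib

section
/- Let h, m, T, k be positive rational numbers such that for every prime p the p-adic norm of 2kT is at most 1 (i.e., 2kT is a p-adic integer at every finite place). Then there exists a positive integer n such that the product over all primes p of the inverses of the p-adic norms of h²k²/(2m) equals n²h²/(8mT²); that is, ∏_p |h²k²/(2m)|_p^{-1} = n²h²/(8mT²). (The product has only finitely many factors different from 1, so it may be taken as a finite product over primes.) -/
/-!
For a nonzero rational `q = ±a/b` in lowest terms, `|q|_p⁻¹ = p^{v_p(a)} / p^{v_p(b)}`, and the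
product over primes of these factors reassembles `a / b = |q|` (product formula). So the Euler
product equals `h²k²/(2m)`. Integrality of `2kT` at every prime makes `n := 2kT` a positive
integer, and `h²k²/(2m) = n²h²/(8mT²)`.
-/

theorem padicNorm_abs (p : ℕ) (q : ℚ) : padicNorm p |q| = padicNorm p q := by
  rcases abs_choice q with h | h <;> rw [h]
  exact padicNorm.neg q

theorem Rat.abs_eq_natAbs_num_div_den (q : ℚ) : |q| = (q.num.natAbs : ℚ) / q.den := by
  rw [Nat.cast_natAbs, Int.cast_abs, ← abs_of_pos (a := (q.den : ℚ)) (by positivity), ← abs_div,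
    Rat.num_div_den]

theorem padicNorm_eq_natAbs_num_div_den (p : ℕ) [Fact p.Prime] (q : ℚ) :
    padicNorm p q = padicNorm p q.num.natAbs / padicNorm p q.den := by
  rw [← padicNorm.div, ← Rat.abs_eq_natAbs_num_div_den, padicNorm_abs]

theorem inv_padicNorm_natCast {p : ℕ} [Fact p.Prime] {n : ℕ} (hn : n ≠ 0) :
    (padicNorm p n)⁻¹ = p ^ n.factorization p := by
  rw [padicNorm.eq_zpow_of_nonzero (by exact_mod_cast hn), padicValRat.of_nat, zpow_neg, inv_inv,
    zpow_natCast, Nat.factorization_def n Fact.out]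

theorem prod_inv_padicNorm_natCast {s : Finset ℕ} (hs : ∀ p ∈ s, p.Prime) {n : ℕ} (hn : n ≠ 0)
    (hsub : n.primeFactors ⊆ s) : ∏ p ∈ s, (padicNorm p n)⁻¹ = n := by
  calc ∏ p ∈ s, (padicNorm p n)⁻¹ = ((∏ p ∈ s, p ^ n.factorization p : ℕ) : ℚ) := by
        push_cast
        exact Finset.prod_congr rfl fun p hp => have := Fact.mk (hs p hp); inv_padicNorm_natCast hn
    _ = n := by
        rw [← Finsupp.prod_of_support_subset _ (by rwa [Nat.support_factorization]) _ (by simp),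
          Nat.prod_factorization_pow_eq_self hn]

theorem finprod_inv_padicNorm {q : ℚ} (hq : q ≠ 0) :
    ∏ᶠ p ∈ {p : ℕ | p.Prime}, (padicNorm p q)⁻¹ = |q| := by
  set a := q.num.natAbs
  set b := q.den
  have ha : a ≠ 0 := by simpa [a] using hq
  have hb : b ≠ 0 := q.den_nz
  have hsplit : ∀ p : ℕ, p.Prime →
      (padicNorm p q)⁻¹ = (padicNorm p a)⁻¹ / (padicNorm p b)⁻¹ := fun p hp => by
    have := Fact.mk hp
    rw [padicNorm_eq_natAbs_num_div_den, inv_div, inv_div_inv]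
  have hsupport : {p : ℕ | p.Prime} ∩ Function.mulSupport (fun p => (padicNorm p q)⁻¹) ⊆
      (a * b).primeFactors := by
    rintro p ⟨hp : p.Prime, hpq⟩
    have := Fact.mk hp
    refine Nat.mem_primeFactors.2 ⟨hp, ?_, mul_ne_zero ha hb⟩
    by_contra hdvd
    rw [hp.dvd_mul, not_or, ← padicNorm.nat_eq_one_iff, ← padicNorm.nat_eq_one_iff] at hdvd
    exact hpq (by simp only [hsplit p hp, hdvd.1, hdvd.2, inv_one, div_one])
  have hprimes : ∀ p ∈ (a * b).primeFactors, p.Prime := fun _ => Nat.prime_of_mem_primeFactors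
  rw [finprod_mem_eq_prod_of_subset _ hsupport hprimes,
    Finset.prod_congr rfl fun p hp => hsplit p (hprimes p hp), Finset.prod_div_distrib,
    prod_inv_padicNorm_natCast hprimes ha (Nat.primeFactors_mul ha hb ▸ Finset.subset_union_left),
    prod_inv_padicNorm_natCast hprimes hb (Nat.primeFactors_mul ha hb ▸ Finset.subset_union_right),
    Rat.abs_eq_natAbs_num_div_den]

theorem Rat.den_eq_one_of_padicNorm_le_one {q : ℚ} (hq : ∀ p : ℕ, p.Prime → padicNorm p q ≤ 1) :
    q.den = 1 := by
  refine Nat.eq_one_iff_not_exists_prime_dvd.2 fun p hp hdvd => ?_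
  have := Fact.mk hp
  have hnum : padicNorm p q.num = 1 := by
    rw [padicNorm.int_eq_one_iff, ← Int.natAbs_dvd_natAbs, Int.natAbs_natCast]
    exact fun h => hp.one_lt.ne' (Nat.Coprime.eq_one_of_dvd (q.reduced.coprime_dvd_left h) hdvd)
  have hden : padicNorm p q.den < 1 := (padicNorm.nat_lt_one_iff _).2 hdvd
  have := calc
    1 = padicNorm p q * padicNorm p q.den := by rw [← padicNorm.mul, Rat.mul_den_eq_num, hnum]
    _ < 1 := mul_lt_one_of_nonneg_of_lt_one_right (hq p hp) (padicNorm.nonneg _) hden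
  exact this.false

/-- **Product formula for the particle-in-a-box spectrum.**
If `h, m, T, k` are positive rationals such that `2kT` is a `p`-adic integer at every
finite place (`|2kT|_p ≤ 1` for every prime `p`), then the Euler product over all primes
of the inverses of the `p`-adic energies `E_p = |h²k²/(2m)|_p` recovers the Archimedean
spectrum: `∏_p |h²k²/(2m)|_p⁻¹ = n²h²/(8mT²)` for some positive integer `n`. -/
theorem padic_box_spectrum_euler_product
    (h m T k : ℚ) (hh : 0 < h) (hm : 0 < m) (hT : 0 < T) (hk : 0 < k)
    (hint : ∀ p : ℕ, p.Prime → padicNorm p (2 * k * T) ≤ 1) :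
    ∃ n : ℕ, 0 < n ∧
      (∏ᶠ p ∈ {p : ℕ | p.Prime}, (padicNorm p (h ^ 2 * k ^ 2 / (2 * m)))⁻¹)
        = (n : ℚ) ^ 2 * h ^ 2 / (8 * m * T ^ 2) := by
  have hkT : 0 < 2 * k * T := by positivity
  obtain ⟨z, hz⟩ : ∃ z : ℤ, (z : ℚ) = 2 * k * T :=
    ⟨_, Rat.coe_int_num_of_den_eq_one (Rat.den_eq_one_of_padicNorm_le_one hint)⟩
  lift z to ℕ using (by exact_mod_cast hz ▸ hkT.le) with n
  rw [Int.cast_natCast] at hz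
  refine ⟨n, by exact_mod_cast hz ▸ hkT, ?_⟩
  rw [finprod_inv_padicNorm (by positivity), abs_of_pos (by positivity), hz]
  field_simp
  ring
end

section
/- Fix a prime p and let μ be an additive Haar measure on ℚ_p normalized so that μ({x ∈ ℚ_p : ‖x‖_p ≤ 1}) = 1. Then for every real number s > 0, the integral of ‖x‖_p^{s−1} over the unit ball {x : ‖x‖_p ≤ 1} with respect to μ equals (1 − p⁻¹)/(1 − p^{−s}). -/
/-!
`ℤ_p ∖ {0}` is the disjoint union of the shells `‖x‖ = p⁻ⁿ`, `n ≥ 0`. Since `pⁿℤ_p` is the disjoint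
union of the `p` translates `j pⁿ + pⁿ⁺¹ℤ_p`, `0 ≤ j < p`, translation invariance gives
`μ(pⁿℤ_p) = p⁻ⁿ`, so the `n`-th shell has measure `(1 - p⁻¹) p⁻ⁿ`. The integrand is the constant
`p^{-n(s-1)}` on it, and the shells contribute a geometric series of ratio `p^{-s}`.
-/

open MeasureTheory Metric Set Function

namespace Padic

variable {p : ℕ} [Fact p.Prime]

lemma one_lt_natCast_prime : 1 < (p : ℝ) := mod_cast (Fact.out : p.Prime).one_lt

lemma natCast_prime_pos : (0 : ℝ) < p := zero_lt_one.trans one_lt_natCast_prime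

lemma exists_lt_norm_sub_natCast_le_inv {x : ℚ_[p]} (hx : ‖x‖ ≤ 1) :
    ∃ j < p, ‖x - j‖ ≤ (p : ℝ)⁻¹ := by
  obtain ⟨j, hjp, hj⟩ := PadicInt.exists_mem_range (⟨x, hx⟩ : ℤ_[p])
  refine ⟨j, hjp, ?_⟩
  rw [← zpow_neg_one, norm_le_pow_iff_norm_lt_pow_add_one, neg_add_cancel, zpow_zero]
  have hlt := PadicInt.mem_nonunits.1 hj
  rw [PadicInt.norm_def] at hlt
  exact_mod_cast hlt

lemma norm_natCast_sub_natCast_eq_one {i j : ℕ} (hi : i < p) (hj : j < p) (hij : i ≠ j) :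
    ‖(i : ℚ_[p]) - j‖ = 1 := by
  have hdvd : ¬ (p : ℤ) ∣ (i : ℤ) - j := fun h ↦
    hij (by have := Int.eq_zero_of_dvd_of_natAbs_lt_natAbs h (by omega); omega)
  have := (norm_intCast_lt_one_iff (p := p)).not.2 hdvd
  push_cast at this
  exact le_antisymm (by exact_mod_cast norm_int_le_one (p := p) ((i : ℤ) - j)) (not_lt.1 this)

lemma closedBall_zero_zpow_eq_iUnion (n : ℤ) :
    closedBall (0 : ℚ_[p]) (p ^ (-n)) =
      ⋃ j : Fin p, closedBall ((j : ℚ_[p]) * p ^ n) (p ^ (-(n + 1))) := by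
  have hp : (p : ℚ_[p]) ≠ 0 := mod_cast (Fact.out : p.Prime).ne_zero
  have hpn : ‖(p : ℚ_[p]) ^ n‖ = (p : ℝ) ^ (-n) := norm_p_zpow n
  have hpn_pos : (0 : ℝ) < (p : ℝ) ^ (-n) := zpow_pos natCast_prime_pos _
  refine Subset.antisymm (fun x hx ↦ ?_) (iUnion_subset fun j ↦ ?_)
  · rw [mem_closedBall_zero_iff] at hx
    have hw : ‖x / p ^ n‖ ≤ 1 := by
      rwa [norm_div, hpn, div_le_one hpn_pos]
    obtain ⟨j, hjp, hj⟩ := exists_lt_norm_sub_natCast_le_inv hw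
    refine mem_iUnion.2 ⟨⟨j, hjp⟩, ?_⟩
    have hx_eq : x - j * p ^ n = (x / p ^ n - j) * p ^ n := by field_simp
    rw [mem_closedBall, dist_eq_norm, hx_eq, norm_mul, hpn, neg_add,
      zpow_add₀ natCast_prime_pos.ne', zpow_neg_one, mul_comm]
    gcongr
  · have hc : (j : ℚ_[p]) * p ^ n ∈ closedBall 0 ((p : ℝ) ^ (-n)) := by
      rw [mem_closedBall_zero_iff, norm_mul, hpn]
      exact mul_le_of_le_one_left hpn_pos.le (by exact_mod_cast norm_int_le_one (p := p) j)
    rw [IsUltrametricDist.closedBall_eq_of_mem hc]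
    exact closedBall_subset_closedBall
      (zpow_le_zpow_right₀ one_lt_natCast_prime.le (by omega))

lemma pairwise_disjoint_closedBall_natCast_mul_zpow (n : ℤ) :
    Pairwise (Disjoint on fun j : Fin p ↦
      closedBall ((j : ℚ_[p]) * p ^ n) ((p : ℝ) ^ (-(n + 1)))) := by
  intro i j hij
  refine (IsUltrametricDist.closedBall_eq_or_disjoint _ _ _).resolve_left fun h ↦ ?_
  have hmem := h ▸ mem_closedBall_self (x := (j : ℚ_[p]) * p ^ n)
    (zpow_pos natCast_prime_pos _).le
  rw [mem_closedBall, dist_eq_norm, ← sub_mul, norm_mul, norm_p_zpow,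
    norm_natCast_sub_natCast_eq_one j.2 i.2 (fun h ↦ hij (Fin.ext h).symm), one_mul] at hmem
  exact absurd hmem (not_le.2 (zpow_lt_zpow_right₀ one_lt_natCast_prime (by omega)))

lemma sphere_zero_zpow_eq_closedBall_sdiff (n : ℤ) :
    sphere (0 : ℚ_[p]) (p ^ (-n)) = closedBall 0 (p ^ (-n)) \ closedBall 0 (p ^ (-(n + 1))) := by
  ext x
  rw [mem_sphere_zero_iff_norm, mem_sdiff, mem_closedBall_zero_iff, mem_closedBall_zero_iff,
    norm_le_pow_iff_norm_lt_pow_add_one x (-(n + 1)), show -(n + 1) + 1 = -n by ring, not_lt]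
  exact le_antisymm_iff

lemma closedBall_zero_one_sdiff_zero_eq_iUnion_sphere :
    closedBall (0 : ℚ_[p]) 1 \ {0} = ⋃ n : ℕ, sphere 0 ((p : ℝ) ^ (-(n : ℤ))) := by
  ext x
  simp only [mem_sdiff, mem_closedBall_zero_iff, mem_singleton_iff, mem_iUnion,
    mem_sphere_zero_iff_norm]
  constructor
  · rintro ⟨hx, hx0⟩
    refine ⟨x.valuation.toNat, ?_⟩
    rw [norm_eq_zpow_neg_valuation hx0, Int.toNat_of_nonneg ((norm_le_one_iff_val_nonneg x).1 hx)]
  · rintro ⟨n, hn⟩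
    refine ⟨hn ▸ zpow_le_one_of_nonpos₀ one_lt_natCast_prime.le (by omega), fun hx0 ↦ ?_⟩
    rw [hx0, norm_zero] at hn
    exact (zpow_pos natCast_prime_pos _).ne hn

lemma pairwise_disjoint_sphere_zero_zpow :
    Pairwise (Disjoint on fun n : ℕ ↦ sphere (0 : ℚ_[p]) ((p : ℝ) ^ (-(n : ℤ)))) := by
  intro m n hmn
  refine disjoint_left.2 fun x hm hn ↦ hmn ?_
  rw [mem_sphere_zero_iff_norm] at hm hn
  exact_mod_cast neg_injective (zpow_right_injective₀ natCast_prime_pos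
    one_lt_natCast_prime.ne' (hm.symm.trans hn))

section Haar

variable [MeasurableSpace ℚ_[p]] [BorelSpace ℚ_[p]] (μ : Measure ℚ_[p]) [μ.IsAddHaarMeasure]

lemma measure_closedBall_zero_zpow_eq_mul (n : ℤ) :
    μ (closedBall 0 (p ^ (-n))) = p * μ (closedBall 0 (p ^ (-(n + 1)))) := by
  rw [closedBall_zero_zpow_eq_iUnion,
    measure_iUnion (pairwise_disjoint_closedBall_natCast_mul_zpow n)
      fun _ ↦ measurableSet_closedBall, tsum_fintype]
  simp only [Measure.addHaar_closedBall_center, Finset.sum_const, Finset.card_univ,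
    Fintype.card_fin, nsmul_eq_mul]

/-- `n ↦ p ^ n μ(p ^ n ℤ_p)` is invariant under `n ↦ n + 1`, hence constant on `ℤ`. -/
lemma measureReal_closedBall_zero_zpow (n : ℤ) :
    μ.real (closedBall 0 (p ^ (-n))) = p ^ (-n) * μ.real (closedBall 0 1) := by
  have hperiodic : Periodic (fun m : ℤ ↦ (p : ℝ) ^ m * μ.real (closedBall 0 (p ^ (-m)))) 1 := by
    intro m
    simp only [measureReal_def, measure_closedBall_zero_zpow_eq_mul μ m, ENNReal.toReal_mul,
      ENNReal.toReal_natCast, zpow_add_one₀ natCast_prime_pos.ne']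
    ring
  have := hperiodic.zsmul_eq n
  simp only [smul_eq_mul, mul_one, zpow_zero, neg_zero, one_mul] at this
  rw [← this, zpow_neg, inv_mul_cancel_left₀ (zpow_pos natCast_prime_pos n).ne']

lemma measureReal_sphere_zero_zpow (n : ℤ) :
    μ.real (sphere 0 (p ^ (-n))) = (1 - (p : ℝ)⁻¹) * p ^ (-n) * μ.real (closedBall 0 1) := by
  rw [sphere_zero_zpow_eq_closedBall_sdiff, measureReal_sdiff (closedBall_subset_closedBall
    (zpow_le_zpow_right₀ one_lt_natCast_prime.le (by omega))) measurableSet_closedBall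
    measure_closedBall_lt_top.ne,
    measureReal_closedBall_zero_zpow, measureReal_closedBall_zero_zpow, neg_add,
    zpow_add₀ natCast_prime_pos.ne', zpow_neg_one]
  ring

lemma setIntegral_sphere_zero_zpow_norm_rpow (s : ℝ) (n : ℤ) :
    ∫ x in sphere 0 (p ^ (-n)), ‖x‖ ^ (s - 1) ∂μ =
      (1 - (p : ℝ)⁻¹) * ((p : ℝ) ^ (-s)) ^ n * μ.real (closedBall 0 1) := by
  have hp := natCast_prime_pos (p := p)
  have hpow : ((p : ℝ) ^ (-n)) ^ (s - 1) * p ^ (-n) = ((p : ℝ) ^ (-s)) ^ n := by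
    simp only [← Real.rpow_intCast, ← Real.rpow_mul hp.le]
    rw [← Real.rpow_add hp]
    push_cast
    ring_nf
  rw [setIntegral_congr_fun isClosed_sphere.measurableSet
      fun x hx ↦ by rw [mem_sphere_zero_iff_norm.1 hx],
    setIntegral_const, measureReal_sphere_zero_zpow, smul_eq_mul, ← hpow]
  ring

lemma setIntegral_closedBall_zero_one_norm_rpow {s : ℝ} (hs : 0 < s) :
    ∫ x in closedBall 0 1, ‖x‖ ^ (s - 1) ∂μ =
      (1 - (p : ℝ)⁻¹) / (1 - (p : ℝ) ^ (-s)) * μ.real (closedBall 0 1) := by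
  set q := (p : ℝ) ^ (-s)
  have hq0 : 0 ≤ q := Real.rpow_nonneg natCast_prime_pos.le _
  have hq1 : q < 1 := Real.rpow_lt_one_of_one_lt_of_neg one_lt_natCast_prime (by linarith)
  have hsphere (n : ℕ) : ∫ x in sphere 0 ((p : ℝ) ^ (-(n : ℤ))), ‖x‖ ^ (s - 1) ∂μ =
      (1 - (p : ℝ)⁻¹) * q ^ n * μ.real (closedBall 0 1) := by
    simpa using setIntegral_sphere_zero_zpow_norm_rpow μ s n
  have hsummable : Summable fun n : ℕ ↦ (1 - (p : ℝ)⁻¹) * q ^ n * μ.real (closedBall 0 1) :=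
    ((summable_geometric_of_lt_one hq0 hq1).mul_left _).mul_right _
  have hint : IntegrableOn (fun x : ℚ_[p] ↦ ‖x‖ ^ (s - 1))
      (⋃ n : ℕ, sphere 0 ((p : ℝ) ^ (-(n : ℤ)))) μ := by
    refine integrableOn_iUnion_of_summable_integral_norm (fun n ↦ ?_) ?_
    · refine (integrableOn_const (C := ((p : ℝ) ^ (-(n : ℤ))) ^ (s - 1))
        (isCompact_sphere 0 _).measure_lt_top.ne).congr_fun
        (fun x hx ↦ ?_) isClosed_sphere.measurableSet
      rw [mem_sphere_zero_iff_norm.1 hx]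
    · simpa only [Real.norm_of_nonneg (Real.rpow_nonneg (norm_nonneg _) _), hsphere]
        using hsummable
  calc ∫ x in closedBall 0 1, ‖x‖ ^ (s - 1) ∂μ
      = ∫ x in closedBall 0 1 \ {0}, ‖x‖ ^ (s - 1) ∂μ :=
        setIntegral_congr_set (sdiff_null_ae_eq_self (measure_singleton 0)).symm
    _ = ∑' n : ℕ, (1 - (p : ℝ)⁻¹) * q ^ n * μ.real (closedBall 0 1) := by
        rw [closedBall_zero_one_sdiff_zero_eq_iUnion_sphere, integral_iUnion
          (fun _ ↦ isClosed_sphere.measurableSet) pairwise_disjoint_sphere_zero_zpow hint]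
        simp only [hsphere]
    _ = (1 - (p : ℝ)⁻¹) / (1 - q) * μ.real (closedBall 0 1) := by
        rw [tsum_mul_right, tsum_mul_left, tsum_geometric_of_lt_one hq0 hq1, div_eq_mul_inv]

end Haar

end Padic

/-- **The local zeta integral on `ℤ_p`.**
For an additive Haar measure `μ` on `ℚ_p` normalized by `μ(ℤ_p) = 1` and any real
`s > 0`, `∫_{‖x‖ ≤ 1} ‖x‖^{s-1} dμ = (1 − p⁻¹)/(1 − p^{−s})`. -/
theorem padic_local_zeta_integral (p : ℕ) [Fact p.Prime]
    [MeasurableSpace ℚ_[p]] [BorelSpace ℚ_[p]]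
    (μ : Measure ℚ_[p]) [μ.IsAddHaarMeasure]
    (hμ : μ {x : ℚ_[p] | ‖x‖ ≤ 1} = 1)
    (s : ℝ) (hs : 0 < s) :
    ∫ x in {x : ℚ_[p] | ‖x‖ ≤ 1}, ‖x‖ ^ (s - 1) ∂μ
      = (1 - (p : ℝ)⁻¹) / (1 - (p : ℝ) ^ (-s)) := by
  have hball : {x : ℚ_[p] | ‖x‖ ≤ 1} = closedBall 0 1 := by
    ext x
    exact mem_closedBall_zero_iff.symm
  rw [hball] at hμ ⊢
  rw [Padic.setIntegral_closedBall_zero_one_norm_rpow μ hs, measureReal_def, hμ,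
    ENNReal.toReal_one, mul_one]
end
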